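/- arXiv:1402.1675 — 2 statements merged into one kernel-verified Lean document; each statement's English description precedes it below -/
import Mathlib

section
/- Let K be any field and let G be a subgroup of S_n. Let G act on the rational function field K(x_1,…,x_n, x_1^{(1)},…,x_n^{(1)},…,x_1^{(m)},…,x_n^{(m)}) in n(m+1) variables by σ(x_i) = x_{σ(i)} and σ(x_i^{(j)}) = x_{σ(i)}^{(j)} for all σ ∈ G, 1 ≤ i ≤ n, 1 ≤ j ≤ m. Then the fixed field of this action equals K(x_1,…,x_n)^G ( t_1^{(1)},…,t_n^{(1)},…,t_1^{(m)},…,t_n^{(m)} ), where t_r^{(j)} = Σ_{i=1}^n x_i^{r−1} x_i^{(j)} for 1 ≤ r ≤ n and 1 ≤ j ≤ m. -/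
noncomputable section

/-- The rational function field `K(x_i : i ∈ I)` over `K`, realized as the fraction field
of the multivariate polynomial ring. -/
abbrev RFF (K : Type) [Field K] (I : Type) := FractionRing (MvPolynomial I K)

/-- The image of the variable `x_i` in the rational function field `K(x_i : i ∈ I)`. -/
noncomputable def Xvar (K : Type) [Field K] (I : Type) (i : I) : RFF K I :=
  algebraMap (MvPolynomial I K) (RFF K I) (MvPolynomial.X i)

/-- Permutations of the variables as `K`-algebra automorphisms of the polynomial ring. -/
def renameHom (K : Type) [Field K] (I : Type) :
    Equiv.Perm I →* (MvPolynomial I K ≃ₐ[K] MvPolynomial I K) where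
  toFun σ := MvPolynomial.renameEquiv K σ
  map_one' := MvPolynomial.renameEquiv_refl K
  map_mul' σ τ := (MvPolynomial.renameEquiv_trans K τ σ).symm

/-- The action of permutations of the variables on `K(x_i : i ∈ I)` by `K`-automorphisms,
determined by `σ(x_i) = x_{σ(i)}`. -/
noncomputable def permHom (K : Type) [Field K] (I : Type) :
    Equiv.Perm I →* (RFF K I ≃ₐ[K] RFF K I) :=
  (IsFractionRing.fieldEquivOfAlgEquivHom K (RFF K I)).comp (renameHom K I)

/-- The fixed field `K(x_i : i ∈ I)^G` of a group `G` of permutations of the variables. -/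
noncomputable def fixedSub (K : Type) [Field K] (I : Type) (G : Subgroup (Equiv.Perm I)) :
    IntermediateField K (RFF K I) :=
  IntermediateField.fixedField (G.map (permHom K I))

/-- An extension `L/K` is `K`-rational if it is purely transcendental over `K`, i.e. generated
by finitely many algebraically independent elements. -/
def IsRatExt (K : Type) [Field K] (L : Type*) [Field L] [Algebra K L] : Prop :=
  ∃ (n : ℕ) (t : Fin n → L), AlgebraicIndependent K t ∧
    IntermediateField.adjoin K (Set.range t) = ⊤

/-- Extension of a permutation `σ` of the `n` variables `x₁,…,xₙ` to a permutation of the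
`n(m+1)` variables `x₁,…,xₙ, x_i^{(j)}` (`1 ≤ i ≤ n`, `1 ≤ j ≤ m`), acting by `σ` on the lower
index everywhere. -/
def extPerm (n m : ℕ) : Equiv.Perm (Fin n) →* Equiv.Perm (Fin n ⊕ Fin n × Fin m) where
  toFun σ := Equiv.sumCongr σ (Equiv.prodCongr σ (Equiv.refl (Fin m)))
  map_one' := by ext x; cases x <;> rfl
  map_mul' a b := by ext x; cases x <;> rfl

/-!
Let `E` be the big field, `F = E^G`, `A = K(x₁,…,xₙ)` and `L` the field generated by
`A ∩ F = A^G` and the `t_r^{(j)}`, so that `L ⊆ F`. For fixed `j`, the `t_r^{(j)}` are the images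
of the `x_i^{(j)}` under the Vandermonde matrix `(x_i^{r-1})`, which is invertible over `A`;
hence `E = A·L`. A basis of `A` over `A^G` then spans `E` over `L`, so
`[E : L] ≤ [A : A^G] ≤ |G| = [E : F]` by Artin's theorem, and `L = F`.
-/

open Matrix in
theorem Subfield.mem_of_sum_pow_mul_mem {E : Type*} [Field E] (M : Subfield E) {n : ℕ}
    {x y : Fin n → E} (hx : Function.Injective x) (hxM : ∀ i, x i ∈ M)
    (hyM : ∀ r : Fin n, ∑ i, x i ^ (r : ℕ) * y i ∈ M) (i : Fin n) : y i ∈ M := by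
  let V : Matrix (Fin n) (Fin n) M := vandermonde fun i => ⟨x i, hxM i⟩
  let t : Fin n → M := fun r => ⟨_, hyM r⟩
  have hV : IsUnit V.det := by
    refine isUnit_iff_ne_zero.2 (det_vandermonde_ne_zero_iff.2 fun i j h => hx ?_)
    exact congrArg Subtype.val h
  have hyV : y ᵥ* V.map M.subtype = M.subtype ∘ t := by
    ext r
    simp [V, t, vecMul, dotProduct, vandermonde_apply, mul_comm]
  have hy : y = M.subtype ∘ (t ᵥ* V⁻¹) := by
    ext k
    rw [Function.comp_apply, RingHom.map_vecMul, ← hyV, vecMul_vecMul, ← Matrix.map_mul,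
      mul_nonsing_inv V hV, Matrix.map_one _ (map_zero _) (map_one _), vecMul_one]
  rw [hy]
  exact ((t ᵥ* V⁻¹) i).2

namespace IntermediateField

variable {K E : Type*} [Field K] [Field E] [Algebra K E]

theorem rank_le_of_sup_eq_top {A L : IntermediateField K E} [Algebra.IsAlgebraic K A]
    (h : A ⊔ L = ⊤) : Module.rank L E ≤ Module.rank K A := by
  have hadj : adjoin L (A : Set E) = ⊤ := by
    apply restrictScalars_injective K
    rw [restrictScalars_adjoin_eq_sup, adjoin_self, sup_comm, h, restrictScalars_top]
  calc Module.rank L E = Module.rank L (adjoin L (A : Set E)) := by rw [hadj, rank_top']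
    _ ≤ Module.rank K A := adjoin_rank_le_of_isAlgebraic_right L A

theorem rank_extendScalars_inf_fixedField_le_card {H : Subgroup (E ≃ₐ[K] E)} [Finite H]
    {A : IntermediateField K E} (hA : ∀ σ ∈ H, ∀ a ∈ A, σ a ∈ A) :
    Module.rank ↥(fixedField H ⊓ A) ↥(extendScalars (inf_le_right : fixedField H ⊓ A ≤ A))
      ≤ Nat.card H := by
  have : IsInvariantSubfield H A.toSubfield := ⟨fun σ _ ha => hA σ σ.2 _ ha⟩
  have : Fintype H := Fintype.ofFinite H
  let i : ↥(fixedField H ⊓ A) ≃+* FixedPoints.subfield H A.toSubfield :=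
    { toFun := fun b => ⟨⟨b, b.2.2⟩, fun σ => Subtype.ext (b.2.1 σ)⟩
      invFun := fun b => ⟨b.1, fun σ => congrArg Subtype.val (b.2 σ), b.1.2⟩
      left_inv := fun _ => rfl
      right_inv := fun _ => rfl
      map_mul' := fun _ _ => rfl
      map_add' := fun _ _ => rfl }
  let j : ↥(extendScalars (inf_le_right : fixedField H ⊓ A ≤ A)) ≃+* A.toSubfield :=
    RingEquiv.refl _
  rw [Algebra.rank_eq_of_equiv_equiv i j rfl,
    ← Module.finrank_eq_rank, Nat.card_eq_fintype_card]
  exact_mod_cast FixedPoints.finrank_le_card H A.toSubfield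

theorem fixedField_eq_of_sup_eq_top {H : Subgroup (E ≃ₐ[K] E)} [Finite H]
    {A L : IntermediateField K E} (hA : ∀ σ ∈ H, ∀ a ∈ A, σ a ∈ A)
    (hL : L ≤ fixedField H) (hAL : fixedField H ⊓ A ≤ L) (htop : A ⊔ L = ⊤) :
    fixedField H = L := by
  set B := fixedField H ⊓ A
  have hBA : B ≤ A := inf_le_right
  have hrankA : Module.rank B (extendScalars hBA) ≤ Nat.card H :=
    rank_extendScalars_inf_fixedField_le_card hA
  have : Algebra.IsAlgebraic B (extendScalars hBA) := by
    have := Module.Free.of_divisionRing B (extendScalars hBA)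
    have := Module.rank_lt_aleph0_iff.mp (hrankA.trans_lt Cardinal.natCast_lt_aleph0)
    exact Algebra.IsAlgebraic.of_finite B _
  have hsup : extendScalars hBA ⊔ extendScalars hAL = ⊤ := by
    rw [extendScalars_sup]
    exact restrictScalars_injective K
      (by rw [extendScalars_restrictScalars, htop, restrictScalars_top])
  have hrank : Module.rank L E ≤ Nat.card H := (rank_le_of_sup_eq_top hsup).trans hrankA
  have : FiniteDimensional L E :=
    Module.rank_lt_aleph0_iff.mp (hrank.trans_lt Cardinal.natCast_lt_aleph0)
  have : Fintype H := Fintype.ofFinite H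
  have hartin : Module.finrank (fixedField H) E = Nat.card H :=
    (FixedPoints.finrank_eq_card H E).trans Nat.card_eq_fintype_card.symm
  exact (eq_of_le_of_finrank_le' hL (hartin ▸ Module.finrank_le_of_rank_le hrank)).symm

end IntermediateField

section PermutedVariables

variable (K : Type) [Field K]

theorem permHom_Xvar {I : Type} (σ : Equiv.Perm I) (i : I) :
    permHom K I σ (Xvar K I i) = Xvar K I (σ i) := by
  simp [permHom, Xvar, renameHom, IsFractionRing.fieldEquivOfAlgEquivHom_apply,
    IsFractionRing.fieldEquivOfAlgEquiv_algebraMap]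

theorem Xvar_injective (I : Type) : Function.Injective (Xvar K I) :=
  (IsFractionRing.injective (MvPolynomial I K) (RFF K I)).comp MvPolynomial.X_injective

theorem adjoin_range_Xvar_eq_top (I : Type) :
    IntermediateField.adjoin K (Set.range (Xvar K I)) = ⊤ := by
  let g := IsScalarTower.toAlgHom K (MvPolynomial I K) (RFF K I)
  have hg : g.range = Algebra.adjoin K (Set.range (Xvar K I)) := by
    rw [← Algebra.map_top, ← MvPolynomial.adjoin_range_X, AlgHom.map_adjoin, ← Set.range_comp]
    rfl
  rw [← IsFractionRing.algHom_fieldRange_eq_of_comp_eq_of_range_eq (f := AlgHom.id K _) rfl hg]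
  exact AlgHom.fieldRange_eq_top.mpr Function.surjective_id

end PermutedVariables

section ExtraVariables

open IntermediateField

variable (K : Type) [Field K] (n m : ℕ)

-- `r` here is the paper's `r - 1`.
def twistedPowerSum (r : ℕ) (j : Fin m) : RFF K (Fin n ⊕ Fin n × Fin m) :=
  ∑ i : Fin n, Xvar K _ (Sum.inl i) ^ r * Xvar K _ (Sum.inr (i, j))

variable {K n m}

@[simp]
theorem extPerm_inl (σ : Equiv.Perm (Fin n)) (i : Fin n) :
    extPerm n m σ (Sum.inl i) = Sum.inl (σ i) :=
  rfl

@[simp]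
theorem extPerm_inr (σ : Equiv.Perm (Fin n)) (i : Fin n) (j : Fin m) :
    extPerm n m σ (Sum.inr (i, j)) = Sum.inr (σ i, j) :=
  rfl

theorem permHom_extPerm_twistedPowerSum (σ : Equiv.Perm (Fin n)) (r : ℕ) (j : Fin m) :
    permHom K _ (extPerm n m σ) (twistedPowerSum K n m r j) = twistedPowerSum K n m r j := by
  simp only [twistedPowerSum, map_sum, map_mul, map_pow, permHom_Xvar, extPerm_inl, extPerm_inr]
  exact Equiv.sum_comp σ fun i => Xvar K _ (Sum.inl i) ^ r * Xvar K _ (Sum.inr (i, j))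

theorem permHom_extPerm_mem_adjoin_inl (σ : Equiv.Perm (Fin n))
    {a : RFF K (Fin n ⊕ Fin n × Fin m)}
    (ha : a ∈ adjoin K (Set.range fun i => Xvar K _ (Sum.inl i))) :
    permHom K _ (extPerm n m σ) a ∈
      adjoin K (Set.range fun i => Xvar K _ (Sum.inl i)) := by
  have hmap : (adjoin K (Set.range fun i => Xvar K _ (Sum.inl i))).map
      (permHom K _ (extPerm n m σ)).toAlgHom ≤
        adjoin K (Set.range fun i => Xvar K _ (Sum.inl i)) := by
    rw [adjoin_map, adjoin_le_iff]
    rintro _ ⟨_, ⟨i, rfl⟩, rfl⟩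
    exact subset_adjoin _ _
      ⟨σ i, (permHom_Xvar K (extPerm n m σ) (Sum.inl i)).symm⟩
  exact hmap ⟨a, ha, rfl⟩

theorem adjoin_range_inl_sup_eq_top {L : IntermediateField K (RFF K (Fin n ⊕ Fin n × Fin m))}
    (hL : ∀ (r : Fin n) (j : Fin m), twistedPowerSum K n m r j ∈ L) :
    adjoin K (Set.range fun i => Xvar K _ (Sum.inl i)) ⊔ L = ⊤ := by
  set A := adjoin K (Set.range fun i => Xvar K _ (Sum.inl i))
  have hx : ∀ i, Xvar K _ (Sum.inl i) ∈ A ⊔ L :=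
    fun i => le_sup_left (a := A) (subset_adjoin _ _ ⟨i, rfl⟩)
  rw [eq_top_iff, ← adjoin_range_Xvar_eq_top, adjoin_le_iff]
  rintro _ ⟨i | ⟨i, j⟩, rfl⟩
  · exact hx i
  · exact Subfield.mem_of_sum_pow_mul_mem (A ⊔ L).toSubfield
      ((Xvar_injective K _).comp Sum.inl_injective) hx
      (fun r => le_sup_right (a := A) (hL r j)) i

end ExtraVariables

/-- **A reduction for permutation actions on extra blocks of variables.**
Let `K` be any field and `G ⊆ Sₙ`, acting on the rational function field
`K(x₁,…,xₙ, x_i^{(j)} : 1 ≤ i ≤ n, 1 ≤ j ≤ m)` by `σ(x_i) = x_{σ(i)}`,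
`σ(x_i^{(j)}) = x_{σ(i)}^{(j)}`. Then the fixed field of this action is
`K(x₁,…,xₙ)^G (t_r^{(j)} : 1 ≤ r ≤ n, 1 ≤ j ≤ m)`, where
`t_r^{(j)} = Σ_{i=1}^n x_i^{r−1} x_i^{(j)}`; that is, it is generated over `K` by the
`G`-invariant elements of the subfield `K(x₁,…,xₙ)` together with the elements `t_r^{(j)}`. -/
theorem fixedField_extra_variables (K : Type) [Field K] (n m : ℕ)
    (G : Subgroup (Equiv.Perm (Fin n))) :
    fixedSub K (Fin n ⊕ Fin n × Fin m) (G.map (extPerm n m)) =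
      IntermediateField.adjoin K
        ((↑(fixedSub K (Fin n ⊕ Fin n × Fin m) (G.map (extPerm n m)) ⊓
            IntermediateField.adjoin K
              (Set.range fun i : Fin n => Xvar K (Fin n ⊕ Fin n × Fin m) (Sum.inl i))) :
          Set (RFF K (Fin n ⊕ Fin n × Fin m))) ∪
        Set.range (fun rj : Fin n × Fin m =>
          ∑ i : Fin n, Xvar K (Fin n ⊕ Fin n × Fin m) (Sum.inl i) ^ (rj.1 : ℕ) *
            Xvar K (Fin n ⊕ Fin n × Fin m) (Sum.inr (i, rj.2)))) := by
  have htwisted : ∀ (r : Fin n) (j : Fin m), twistedPowerSum K n m r j ∈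
      fixedSub K (Fin n ⊕ Fin n × Fin m) (G.map (extPerm n m)) := by
    rintro r j ⟨_, _, ⟨σ, -, rfl⟩, rfl⟩
    exact permHom_extPerm_twistedPowerSum σ r j
  have : Finite ((G.map (extPerm n m)).map (permHom K _)) :=
    Finite.of_surjective _ ((permHom K _).subgroupMap_surjective _)
  refine IntermediateField.fixedField_eq_of_sup_eq_top ?_ ?_
    (fun z hz => IntermediateField.subset_adjoin _ _ (Or.inl hz))
    (adjoin_range_inl_sup_eq_top fun r j =>
      IntermediateField.subset_adjoin _ _ (Or.inr ⟨(r, j), rfl⟩))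
  · rintro _ ⟨_, ⟨σ, -, rfl⟩, rfl⟩ a ha
    exact permHom_extPerm_mem_adjoin_inl σ ha
  · rw [IntermediateField.adjoin_le_iff]
    rintro _ (hz | ⟨⟨r, j⟩, rfl⟩)
    · exact hz.1
    · exact htwisted r j
end
end

section
/- Let K be a field and let L be an extension field of K generated by elements x_1,…,x_n, y, where x_1,…,x_n are algebraically independent over K and the only relation is y^m = f(x_1,…,x_n), where f is a homogeneous rational function of x_1,…,x_n of degree k (a quotient of homogeneous polynomials whose degrees differ by k). If m and k are coprime, then L is K-rational (a purely transcendental extension of K of transcendence degree n). -/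
/-!
Dehomogenize: put `X = x₀` and `eᵢ = xᵢ / x₀`. Homogeneity gives `y ^ m = X ^ k * g` with
`g = p(e) / q(e) ∈ K(e₁, …, eₙ₋₁)`. If `u m + v k = 1`, then `t = y ^ v * X ^ u` satisfies
`X = t ^ m * g ^ (-v)` and `y = t ^ k * g ^ u`, so `K(t, e₁, …, eₙ₋₁) = K(x, y) = L`. (When
`k = 0`, hence `m = 1`, or `n = 0`, already `y ∈ K(x)`.) Since `y` is algebraic over `K(x)`, the
transcendence degree of `L/K` is `n`, and `n` generators of an extension of transcendence degree
`n` are algebraically independent.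
-/

open IntermediateField Set

theorem MvPolynomial.IsHomogeneous.aeval_const_mul {σ R S : Type*} [CommSemiring R]
    [CommSemiring S] [Algebra R S] {p : MvPolynomial σ R} {a : ℕ} (hp : p.IsHomogeneous a)
    (c : S) (v : σ → S) :
    MvPolynomial.aeval (fun i => c * v i) p = c ^ a * MvPolynomial.aeval v p := by
  rw [aeval_def, aeval_def, eval₂_eq, eval₂_eq, Finset.mul_sum]
  refine Finset.sum_congr rfl fun d hd => ?_
  have hdeg : d.degree = a := by
    by_contra h
    exact mem_support_iff.mp hd (hp.coeff_eq_zero h)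
  rw [← hdeg, Finsupp.degree_apply]
  simp_rw [mul_pow]
  rw [Finset.prod_mul_distrib, Finset.prod_pow_eq_pow_sum]
  ring

variable {K L : Type*} [Field K] [Field L] [Algebra K L]

theorem IsTranscendenceBasis.algebraicIndependent_of_adjoin_eq_top {ι : Type*} [Finite ι]
    {x t : ι → L} (hx : IsTranscendenceBasis K x) (ht : adjoin K (range t) = ⊤) :
    AlgebraicIndependent K t := by
  have : Algebra.IsAlgebraic (Algebra.adjoin K (range t)) L := by
    rw [← isAlgebraic_adjoin_iff_top]
    exact ⟨fun z => isAlgebraic_algebraMap (⟨z, ht ▸ mem_top⟩ : adjoin K (range t))⟩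
  exact (Algebra.IsAlgebraic.isTranscendenceBasis_of_lift_le_trdeg_of_finite K t
    hx.lift_cardinalMk_eq_trdeg.le).1

theorem AlgebraicIndependent.isTranscendenceBasis_of_adjoin_union_singleton_eq_top {ι : Type*}
    {x : ι → L} {y : L} (hx : AlgebraicIndependent K x) (hgen : adjoin K (range x ∪ {y}) = ⊤)
    (hy : IsAlgebraic (adjoin K (range x)) y) : IsTranscendenceBasis K x := by
  rw [hx.isTranscendenceBasis_iff_isAlgebraic, ← isAlgebraic_adjoin_iff_top]
  refine ⟨fun z => ?_⟩
  have hz : z ∈ (adjoin (adjoin K (range x)) {y}).restrictScalars K := by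
    rw [adjoin_adjoin_left, hgen]; trivial
  exact ((isAlgebraic_adjoin_simple hy.isIntegral).isAlgebraic ⟨z, hz⟩).algHom (val _)

theorem mem_and_mem_of_zpow_eq_zpow_mul {S : Type*} [SetLike S L] [SubfieldClass S L] {F : S}
    {X y g : L} {m k u v : ℤ} (hX : X ≠ 0) (hy : y ≠ 0) (h : y ^ m = X ^ k * g)
    (huv : u * m + v * k = 1) (ht : y ^ v * X ^ u ∈ F) (hg : g ∈ F) : X ∈ F ∧ y ∈ F := by
  have hg_eq : g = y ^ m * (X ^ k)⁻¹ := by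
    rw [h, mul_comm (X ^ k), mul_inv_cancel_right₀ (zpow_ne_zero k hX)]
  have hX_eq : (y ^ v * X ^ u) ^ m * g ^ (-v) = X := by
    calc (y ^ v * X ^ u) ^ m * g ^ (-v) = X ^ (u * m + v * k) := by
          simp only [hg_eq, mul_zpow, inv_zpow, zpow_neg, ← zpow_mul]
          rw [mul_comm v m, mul_comm k v, zpow_add₀ hX]
          field_simp
      _ = X := by rw [huv, zpow_one]
  have hy_eq : (y ^ v * X ^ u) ^ k * g ^ u = y := by
    calc (y ^ v * X ^ u) ^ k * g ^ u = y ^ (u * m + v * k) := by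
          simp only [hg_eq, mul_zpow, inv_zpow, ← zpow_mul]
          rw [mul_comm m u, mul_comm k u, zpow_add₀ hy]
          field_simp
      _ = y := by rw [huv, zpow_one]
  exact ⟨hX_eq ▸ mul_mem (zpow_mem ht m) (zpow_mem hg (-v)),
    hy_eq ▸ mul_mem (zpow_mem ht k) (zpow_mem hg u)⟩

theorem zpow_eq_zpow_sub_mul_div_of_isHomogeneous {ι : Type*} {x : ι → L} {c y : L}
    (hc : c ≠ 0) {a b m : ℕ} {p q : MvPolynomial ι K} (hp : p.IsHomogeneous a) (hq : q.IsHomogeneous b)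
    (hq0 : MvPolynomial.aeval x q ≠ 0)
    (hpq : y ^ m * MvPolynomial.aeval x q = MvPolynomial.aeval x p) :
    y ^ (m : ℤ) = c ^ ((a : ℤ) - b) *
      (MvPolynomial.aeval (fun i => x i / c) p / MvPolynomial.aeval (fun i => x i / c) q) := by
  have hx : (fun i => c * (x i / c)) = x := funext fun i => mul_div_cancel₀ (x i) hc
  rw [← hx, hp.aeval_const_mul, hq.aeval_const_mul] at hpq
  rw [← hx, hq.aeval_const_mul] at hq0
  rw [zpow_natCast, eq_div_of_mul_eq hq0 hpq, zpow_sub₀ hc, zpow_natCast, zpow_natCast]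
  field_simp

theorem adjoin_union_singleton_le_adjoin_range_cons {n : ℕ} {x : Fin (n + 1) → L} {y g : L}
    {m k u v : ℤ} (hX : x 0 ≠ 0) (hy : y ≠ 0) (hg : g ∈ adjoin K (range fun i => x i / x 0))
    (h : y ^ m = x 0 ^ k * g) (huv : u * m + v * k = 1) :
    adjoin K (range x ∪ {y}) ≤
      adjoin K (range (Fin.cons (y ^ v * x 0 ^ u) fun i : Fin n => x i.succ / x 0)) := by
  set F := adjoin K (range (Fin.cons (y ^ v * x 0 ^ u) fun i : Fin n => x i.succ / x 0))
  have he : ∀ i, x i / x 0 ∈ F := Fin.cases (by rw [div_self hX]; exact one_mem F)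
    fun i => subset_adjoin K _ ⟨i.succ, rfl⟩
  have hgF : g ∈ F := adjoin_le_iff.mpr (range_subset_iff.mpr he) hg
  obtain ⟨hXF, hyF⟩ := mem_and_mem_of_zpow_eq_zpow_mul (F := F) hX hy h huv
    (subset_adjoin K _ ⟨0, rfl⟩) hgF
  refine adjoin_le_iff.mpr (union_subset (range_subset_iff.mpr fun i => ?_)
    (singleton_subset_iff.mpr hyF))
  simpa [div_mul_cancel₀ _ hX] using mul_mem (he i) hXF

/-- **A rationality criterion (Lemma 2.7).**
Let `L/K` be a field extension generated by elements `x₁,…,xₙ, y`, where `x₁,…,xₙ` are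
algebraically independent over `K` and `y^m = f(x₁,…,xₙ)` for a homogeneous rational function
`f` of degree `k` (a quotient of homogeneous polynomials of degrees `a` and `b` with
`a − b = k`). If `m > 0` and `m` and `k` are coprime, then `L` is `K`-rational:
`L` is purely transcendental over `K` of transcendence degree `n`, i.e. generated over `K`
by `n` algebraically independent elements. -/
theorem rational_of_coprime_relation (K L : Type) [Field K] [Field L] [Algebra K L]
    (n : ℕ) (m : ℕ) (k : ℤ) (x : Fin n → L) (y : L)
    (hx : AlgebraicIndependent K x)
    (hgen : IntermediateField.adjoin K (Set.range x ∪ {y}) = ⊤)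
    (hm : 0 < m)
    (hrel : ∃ (a b : ℕ) (p q : MvPolynomial (Fin n) K), p.IsHomogeneous a ∧ q.IsHomogeneous b ∧
      MvPolynomial.aeval x q ≠ 0 ∧ (a : ℤ) - (b : ℤ) = k ∧
      y ^ m * MvPolynomial.aeval x q = MvPolynomial.aeval x p)
    (hcop : IsCoprime (m : ℤ) k) :
    ∃ t : Fin n → L, AlgebraicIndependent K t ∧
      IntermediateField.adjoin K (Set.range t) = ⊤ := by
  obtain ⟨a, b, p, q, hp, hq, hq0, rfl, hpq⟩ := hrel
  have hym : y ^ m ∈ adjoin K (range x) :=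
    (mem_adjoin_range_iff K x _).mpr ⟨p, q, eq_div_of_mul_eq hq0 hpq⟩
  have hbasis : IsTranscendenceBasis K x :=
    hx.isTranscendenceBasis_of_adjoin_union_singleton_eq_top hgen
      (IsAlgebraic.of_pow hm (isAlgebraic_algebraMap (⟨y ^ m, hym⟩ : ↥(adjoin K (range x)))))
  suffices ∃ t : Fin n → L, adjoin K (range t) = ⊤ by
    obtain ⟨t, ht⟩ := this
    exact ⟨t, hbasis.algebraicIndependent_of_adjoin_eq_top ht, ht⟩
  by_cases hyx : y ∈ adjoin K (range x)
  · exact ⟨x, top_unique <| hgen ▸ adjoin_le_iff.mpr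
      (union_subset (subset_adjoin K _) (singleton_subset_iff.mpr hyx))⟩
  have hy : y ≠ 0 := fun h => hyx (h ▸ zero_mem _)
  have hk : (a : ℤ) - b ≠ 0 := fun hk => by
    obtain rfl : m = 1 :=
      (Nat.coprime_zero_right m).mp (Nat.isCoprime_iff_coprime.mp (by simpa [hk] using hcop))
    exact hyx (by simpa using hym)
  obtain ⟨n, rfl⟩ : ∃ n', n = n' + 1 := Nat.exists_eq_add_one.mpr <| Nat.pos_of_ne_zero <| by
    rintro rfl
    have hp0 : MvPolynomial.aeval x p ≠ 0 := hpq ▸ mul_ne_zero (pow_ne_zero m hy) hq0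
    refine hk ?_
    rw [hp.inj_right (MvPolynomial.isHomogeneous_of_isEmpty _ _ p) (ne_of_apply_ne _ (by simpa)),
      hq.inj_right (MvPolynomial.isHomogeneous_of_isEmpty _ _ q) (ne_of_apply_ne _ (by simpa)),
      sub_self]
  obtain ⟨u, v, huv⟩ := hcop
  exact ⟨_, top_unique <| hgen ▸ adjoin_union_singleton_le_adjoin_range_cons (hx.ne_zero 0) hy
    ((mem_adjoin_range_iff K _ _).mpr ⟨p, q, rfl⟩)
    (zpow_eq_zpow_sub_mul_div_of_isHomogeneous (hx.ne_zero 0) hp hq hq0 hpq) huv⟩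
end
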